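/- Given groups G₁,…,Gₙ with expected costs T_k = T_{G_k} ≥ 0 and success probabilities P_k = P_{G_k} ∈ (0,1], executed one at a time until the first group succeeds, the total expected cost equals Σ_{k=1}^n T_k ∏_{j<k}(1−P_j), and this is minimized over orderings of the groups by sorting the groups in increasing order of the ratio T_k/P_k. -/

import Mathlib

/-!
Conditioning on the first group gives `C(a :: l) = t a + (1 - p a) C(l)`. Exchanging two
adjacent groups `a, b` therefore changes the cost by `t a p b - t b p a` (the cost of the tail
cancels), so moving an element of least ratio `t / p` forward never increases the cost, and since
the factors `1 - p` are nonnegative this survives prefixing. Bubbling the least element to the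
front and inducting shows that the ratio-sorted schedule is cheapest among its permutations.
-/
open Finset

theorem Fin.prod_Iio_succ {M : Type*} [CommMonoid M] {n : ℕ} (f : Fin (n + 1) → M) (i : Fin n) :
    ∏ j ∈ Iio i.succ, f j = f 0 * ∏ j ∈ Iio i, f j.succ := by
  rw [← Finset.Ico_bot, bot_eq_zero, ← Finset.Ioo_insert_left (Fin.succ_pos i),
    prod_insert (by simp), ← Fin.map_succEmb_Iio, prod_map]
  rfl

namespace SequentialSearch

variable {α : Type*} (t p : α → ℝ)

/-- Expected cost of running the groups of `l` in order until the first success, where group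
`a` costs `t a` and succeeds with probability `p a`. -/
def expectedCost (l : List α) : ℝ :=
  l.foldr (fun a c => t a + (1 - p a) * c) 0

@[simp] lemma expectedCost_nil : expectedCost t p ([] : List α) = 0 := rfl

@[simp] lemma expectedCost_cons (a : α) (l : List α) :
    expectedCost t p (a :: l) = t a + (1 - p a) * expectedCost t p l := rfl

lemma sum_mul_prod_Iio_eq_expectedCost {n : ℕ} (f : Fin n → α) :
    ∑ k : Fin n, t (f k) * ∏ j ∈ Iio k, (1 - p (f j)) = expectedCost t p (List.ofFn f) := by
  induction n with
  | zero => simp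
  | succ n ih =>
    have hIio : Iio (0 : Fin (n + 1)) = ∅ := by simp [← bot_eq_zero]
    simp only [Fin.sum_univ_succ, Fin.prod_Iio_succ, hIio, prod_empty, mul_one,
      mul_left_comm _ (1 - p (f 0)), ← mul_sum, ih fun i => f i.succ, List.ofFn_succ,
      expectedCost_cons]

variable {t p}

lemma expectedCost_cons_le_cons {a : α} (ha : p a ≤ 1) {l l' : List α}
    (h : expectedCost t p l ≤ expectedCost t p l') :
    expectedCost t p (a :: l) ≤ expectedCost t p (a :: l') := by
  simp only [expectedCost_cons]
  gcongr

lemma expectedCost_cons_cons_le_swap {a b : α} (hab : t a * p b ≤ t b * p a) (l : List α) :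
    expectedCost t p (a :: b :: l) ≤ expectedCost t p (b :: a :: l) := by
  simp only [expectedCost_cons]
  linarith

variable [DecidableEq α]

lemma expectedCost_cons_erase_le {a : α} {l : List α} (ha : a ∈ l)
    (hmin : ∀ x ∈ l, t a * p x ≤ t x * p a) (hp : ∀ x ∈ l, p x ≤ 1) :
    expectedCost t p (a :: l.erase a) ≤ expectedCost t p l := by
  induction l with
  | nil => simp at ha
  | cons b l ih =>
    obtain rfl | hba := eq_or_ne b a
    · simp
    have hal : a ∈ l := (List.mem_cons.mp ha).resolve_left hba.symm
    rw [List.erase_cons_tail (by simpa using hba)]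
    calc expectedCost t p (a :: b :: l.erase a)
        ≤ expectedCost t p (b :: a :: l.erase a) :=
          expectedCost_cons_cons_le_swap (hmin b List.mem_cons_self) _
      _ ≤ expectedCost t p (b :: l) :=
          expectedCost_cons_le_cons (hp b List.mem_cons_self)
            (ih hal (fun x hx => hmin x (List.mem_cons_of_mem b hx))
              (fun x hx => hp x (List.mem_cons_of_mem b hx)))

theorem expectedCost_le_of_perm {l l' : List α} (hperm : l.Perm l')
    (hsorted : l.Pairwise fun x y => t x * p y ≤ t y * p x) (hp : ∀ x ∈ l, p x ≤ 1) :
    expectedCost t p l ≤ expectedCost t p l' := by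
  induction l generalizing l' with
  | nil => rw [List.Perm.nil_eq hperm]
  | cons a l ih =>
    have hal' : a ∈ l' := hperm.subset List.mem_cons_self
    have hmin : ∀ x ∈ l', t a * p x ≤ t x * p a := by
      intro x hx
      rcases List.mem_cons.mp (hperm.symm.subset hx) with rfl | hxl
      · exact le_rfl
      · exact List.rel_of_pairwise_cons hsorted hxl
    have hperm' : l.Perm (l'.erase a) := by simpa using hperm.erase a
    calc expectedCost t p (a :: l)
        ≤ expectedCost t p (a :: l'.erase a) :=
          expectedCost_cons_le_cons (hp a List.mem_cons_self)
            (ih hperm' hsorted.of_cons fun x hx => hp x (List.mem_cons_of_mem a hx))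
      _ ≤ expectedCost t p l' :=
          expectedCost_cons_erase_le hal' hmin fun x hx => hp x (hperm.symm.subset hx)

end SequentialSearch

open SequentialSearch in
theorem stmt_13_general (n : ℕ) (T P : Fin n → ℝ)
    (hP : ∀ k, 0 < P k ∧ P k ≤ 1)
    (hsort : ∀ j k : Fin n, j ≤ k → T j / P j ≤ T k / P k) :
    ∀ σ : Equiv.Perm (Fin n),
      (∑ k : Fin n, T k * ∏ j ∈ Finset.Iio k, (1 - P j)) ≤
        ∑ k : Fin n, T (σ k) * ∏ j ∈ Finset.Iio k, (1 - P (σ j)) := by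
  intro σ
  have hperm : (List.finRange n).Perm (List.ofFn σ) := by
    rw [List.ofFn_eq_map]
    exact (Equiv.Perm.map_finRange_perm σ).symm
  have hsorted : (List.finRange n).Pairwise fun j k => T j * P k ≤ T k * P j :=
    (List.pairwise_le_finRange n).imp fun hjk =>
      (div_le_div_iff₀ (hP _).1 (hP _).1).mp (hsort _ _ hjk)
  calc ∑ k : Fin n, T k * ∏ j ∈ Iio k, (1 - P j)
      = expectedCost T P (List.finRange n) := by
        simpa [List.ofFn_id] using sum_mul_prod_Iio_eq_expectedCost T P id
    _ ≤ expectedCost T P (List.ofFn σ) :=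
        expectedCost_le_of_perm hperm hsorted fun k _ => (hP k).2
    _ = ∑ k : Fin n, T (σ k) * ∏ j ∈ Iio k, (1 - P (σ j)) :=
        (sum_mul_prod_Iio_eq_expectedCost T P σ).symm

/-- Executing groups one at a time until the first group succeeds: for any
ordering `σ`, the total expected cost equals `Σₖ T_{σ(k)} ∏_{j<k} (1 - P_{σ(j)})`,
and sorting the groups in increasing order of `T/P` minimizes it. -/
theorem stmt_13 (n : ℕ) (T P : Fin n → ℝ)
    (hT : ∀ k, 0 ≤ T k)
    (hP : ∀ k, 0 < P k ∧ P k ≤ 1)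
    (hsort : ∀ j k : Fin n, j ≤ k → T j / P j ≤ T k / P k) :
    ∀ σ : Equiv.Perm (Fin n),
      (∑ k : Fin n, T k * ∏ j ∈ Finset.Iio k, (1 - P j)) ≤
        ∑ k : Fin n, T (σ k) * ∏ j ∈ Finset.Iio k, (1 - P (σ j)) :=
  stmt_13_general n T P hP hsort
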